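/- Let T > 0, and let Γ : [0,T] × ℝ^d → ℝ^d satisfy, for all 0 ≤ s < t ≤ T and x, y ∈ ℝ^d: |Γ_{s,t}(x)| ≤ C|t−s|^γ and |Γ_{s,t}(x) − Γ_{s,t}(y)| ≤ C|t−s|^γ |x−y|, with γ ∈ (1/2, 1). Let β > 0 with γ + β > 1, let (μ_t)_{t∈[0,T]} be a β-Hölder flow of probability measures on ℝ^d with finite first moments, and let Y ∈ C^β([0,T];ℝ^d). Then the Riemann sums Σ_{[u,v]∈D} (Γ_{u,v} ∗ μ_u)(Y_u) over partitions D of [0,t] converge as the mesh |D| → 0 to a limit ∫_0^t (Γ_{dr} ∗ μ_r)(Y_r), and for all s < t: |∫_s^t (Γ_{dr} ∗ μ_r)(Y_r) − (Γ_{s,t} ∗ μ_s)(Y_s)| ≤ C' |t−s|^{γ+β} ([Y]_β + [μ]_β), where C' depends only on γ, β and the bounds on Γ. -/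

import Mathlib

open MeasureTheory Set

noncomputable section

abbrev Ed (d : ℕ) := EuclideanSpace ℝ (Fin d)

/-- `I` is the limit of Riemann sums `Σ_{[u,v] ∈ D} Ξ_{u,v}` along partitions `D` of `[s,t]`
as the mesh tends to `0`. -/
def IsRiemannLimit {E : Type*} [NormedAddCommGroup E]
    (Ξ : ℝ → ℝ → E) (s t : ℝ) (I : E) : Prop :=
  ∀ ε > (0:ℝ), ∃ δ > (0:ℝ), ∀ n : ℕ, ∀ σ : Fin (n + 1) → ℝ,
    Monotone σ → σ 0 = s → σ (Fin.last n) = t →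
    (∀ i : Fin n, σ i.succ - σ i.castSucc < δ) →
    ‖(∑ i : Fin n, Ξ (σ i.castSucc) (σ i.succ)) - I‖ < ε

/-- Convolution of the time increment `Γ_{s,t}` against a measure: `(Γ_{s,t} ∗ m)(x)`. -/
def convInc {d : ℕ} (Γ : ℝ → Ed d → Ed d) (s t : ℝ) (m : Measure (Ed d)) (x : Ed d) : Ed d :=
  ∫ y, (Γ t (x - y) - Γ s (x - y)) ∂m

/-!
Write `δΞ_{s,u,t} = Ξ_{s,t} - Ξ_{s,u} - Ξ_{u,t}` for the germ `Ξ_{u,v} = (Γ_{u,v} ∗ μ_u)(Y_u)`.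
Since `Γ_{s,t} - Γ_{s,u} = Γ_{u,t}`, the defect is `(Γ_{u,t} ∗ μ_s)(Y_s) - (Γ_{u,t} ∗ μ_u)(Y_u)`.
Moving `Y_s` to `Y_u` costs `C |t-u|^γ ‖Y_s - Y_u‖` by the Lipschitz bound on `Γ_{u,t}`;
moving `μ_s` to `μ_u` costs `C |t-u|^γ [μ]_β |u-s|^β`, by testing `μ_s - μ_u` against
`g ∘ Γ_{u,t}(Y_u - ·)` for a norming functional `g`. So
`‖δΞ_{s,u,t}‖ ≤ C ([Y]_β + [μ]_β) |t-s|^{γ+β}` with `γ + β > 1`, and the sewing lemma applies.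

The sewing lemma follows Young: in a partition of `[s,t]` into `n ≥ 2` intervals some point has
its two neighbours at distance at most `2 |t-s| / (n-1)`; removing it changes the Riemann sum by
at most `L (2 |t-s| / (n-1))^e`, so every Riemann sum is within `2^e ζ(e) L |t-s|^e` of `Ξ_{s,t}`.
Applied block by block on a common refinement, this bounds the difference of two Riemann sums of
mesh `≤ δ` by `2 · 2^e ζ(e) L δ^{e-1} |t-s|`; hence uniform Riemann sums converge, and their
limit `I` satisfies both conclusions.
-/

open Finset Filter Topology
open scoped NNReal

def sewingConst (e : ℝ) : ℝ := 2 ^ e * ∑' k : ℕ, (k : ℝ) ^ (-e)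

lemma summable_nat_rpow_neg {e : ℝ} (he : 1 < e) : Summable fun k : ℕ => (k : ℝ) ^ (-e) :=
  Real.summable_nat_rpow.2 (by linarith)

lemma sewingConst_pos {e : ℝ} (he : 1 < e) : 0 < sewingConst e := by
  have hsum : 0 < ∑' k : ℕ, (k : ℝ) ^ (-e) :=
    (summable_nat_rpow_neg he).tsum_pos (fun k => by positivity) 1 (by simp)
  unfold sewingConst
  positivity

lemma rpow_le_rpow_sub_one_mul {x M e : ℝ} (he : 1 ≤ e) (hx : 0 ≤ x) (hxM : x ≤ M) :
    x ^ e ≤ M ^ (e - 1) * x := by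
  calc x ^ e = x ^ (e - 1) * x := by
        rw [← Real.rpow_add_one' hx (by linarith), sub_add_cancel]
    _ ≤ M ^ (e - 1) * x := by gcongr

lemma rpow_mul_rpow_le_rpow_add {s u t γ β : ℝ} (hsu : s ≤ u) (hut : u ≤ t) (hγ : 0 ≤ γ)
    (hβ : 0 < β) : (t - u) ^ γ * (u - s) ^ β ≤ (t - s) ^ (γ + β) := by
  rw [Real.rpow_add' (by linarith) (by linarith)]
  exact mul_le_mul (Real.rpow_le_rpow (by linarith) (by linarith) hγ)
    (Real.rpow_le_rpow (by linarith) (by linarith) hβ.le) (Real.rpow_nonneg (by linarith) _)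
    (Real.rpow_nonneg (by linarith) _)

lemma tendsto_div_add_one_rpow_nhds_zero (c : ℝ) {e : ℝ} (he : 0 < e) :
    Tendsto (fun m : ℕ => (c / (m + 1)) ^ e) atTop (𝓝 0) := by
  have h := (tendsto_one_div_add_atTop_nhds_zero_nat.const_mul c).rpow_const (Or.inr he.le)
  simpa [Real.zero_rpow he.ne', div_eq_mul_inv] using h

section Sewing

variable {E : Type*} [NormedAddCommGroup E] {Ξ : ℝ → ℝ → E} {a b L e : ℝ}

def riemannSum (Ξ : ℝ → ℝ → E) (p : ℕ → ℝ) (n : ℕ) : E :=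
  ∑ k ∈ range n, Ξ (p k) (p (k + 1))

def HasSewingBound (Ξ : ℝ → ℝ → E) (a b L e : ℝ) : Prop :=
  ∀ ⦃s u t : ℝ⦄, a ≤ s → s ≤ u → u ≤ t → t ≤ b → ‖Ξ s t - Ξ s u - Ξ u t‖ ≤ L * (t - s) ^ e

lemma HasSewingBound.apply_self (hΞ : HasSewingBound Ξ a b L e) (he : 0 < e) {u : ℝ}
    (hu : u ∈ Icc a b) : Ξ u u = 0 := by
  simpa [Real.zero_rpow he.ne'] using hΞ hu.1 le_rfl le_rfl hu.2

lemma exists_add_two_sub_le {p : ℕ → ℝ} (hp : Monotone p) (N : ℕ) :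
    ∃ j ≤ N, p (j + 2) - p j ≤ 2 * (p (N + 2) - p 0) / (N + 1) := by
  have htel : ∑ j ∈ range (N + 1), (p (j + 2) - p j)
      = (p (N + 2) - p 1) + (p (N + 1) - p 0) := by
    rw [← sum_range_sub (fun k => p (k + 1)), ← sum_range_sub p, ← sum_add_distrib]
    exact sum_congr rfl fun j _ => by ring
  have hle : ∑ j ∈ range (N + 1), (p (j + 2) - p j)
      ≤ ∑ _j ∈ range (N + 1), 2 * (p (N + 2) - p 0) / (N + 1) := by
    rw [htel, sum_const, card_range, nsmul_eq_mul, Nat.cast_add_one,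
      mul_div_cancel₀ _ (by positivity)]
    linarith [hp (show 0 ≤ 1 by omega), hp (show N + 1 ≤ N + 2 by omega)]
  obtain ⟨j, hj, hgap⟩ := exists_le_of_sum_le ⟨0, by simp⟩ hle
  exact ⟨j, Nat.lt_succ_iff.1 (mem_range.1 hj), hgap⟩

lemma exists_riemannSum_eq_sub_of_erase (Ξ : ℝ → ℝ → E) {p : ℕ → ℝ} (hp : Monotone p)
    {j N : ℕ} (hj : j ≤ N) :
    ∃ q : ℕ → ℝ, Monotone q ∧ q 0 = p 0 ∧ q (N + 1) = p (N + 2) ∧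
      riemannSum Ξ p (N + 2) = riemannSum Ξ q (N + 1) -
        (Ξ (p j) (p (j + 2)) - Ξ (p j) (p (j + 1)) - Ξ (p (j + 1)) (p (j + 2))) := by
  obtain ⟨r, rfl⟩ := Nat.exists_eq_add_of_le hj
  set q : ℕ → ℝ := fun k => p (if k ≤ j then k else k + 1) with hq
  have hq_lt : ∀ k ≤ j, q k = p k := fun k hk => by simp [hq, hk]
  have hq_gt : ∀ k, q (j + 1 + k) = p (j + 2 + k) := fun k => by
    simp only [hq, if_neg (show ¬ j + 1 + k ≤ j by omega)]
    ring_nf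
  refine ⟨q, fun k l hkl => hp (by split_ifs <;> omega), hq_lt 0 (Nat.zero_le _), ?_, ?_⟩
  · rw [show j + r + 1 = j + 1 + r by ring, hq_gt]
    ring_nf
  · rw [riemannSum, riemannSum, show j + r + 2 = j + 2 + r by ring,
      show j + r + 1 = j + 1 + r by ring, sum_range_add _ (j + 2) r, sum_range_add _ (j + 1) r,
      sum_range_succ _ (j + 1), sum_range_succ _ j, sum_range_succ _ j]
    have hhead : ∑ k ∈ range j, Ξ (q k) (q (k + 1)) = ∑ k ∈ range j, Ξ (p k) (p (k + 1)) :=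
      sum_congr rfl fun k hk => by
        rw [hq_lt k (by simp at hk; omega), hq_lt (k + 1) (by simp at hk; omega)]
    have htail : ∑ k ∈ range r, Ξ (q (j + 1 + k)) (q (j + 1 + k + 1))
        = ∑ k ∈ range r, Ξ (p (j + 2 + k)) (p (j + 2 + k + 1)) :=
      sum_congr rfl fun k _ => by rw [add_assoc (j + 1), hq_gt, hq_gt]; ring_nf
    rw [hhead, htail, hq_lt j le_rfl, show q (j + 1) = p (j + 2) from by simpa using hq_gt 0]
    abel

lemma norm_riemannSum_sub_le_sum (hL : 0 ≤ L) (he : 0 < e) (hΞ : HasSewingBound Ξ a b L e)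
    (n : ℕ) {p : ℕ → ℝ} (hp : Monotone p) (ha : a ≤ p 0) (hb : p n ≤ b) :
    ‖riemannSum Ξ p n - Ξ (p 0) (p n)‖
      ≤ L * (2 * (p n - p 0)) ^ e * ∑ k ∈ Ico 1 n, (k : ℝ) ^ (-e) := by
  induction n generalizing p with
  | zero => simp [riemannSum, hΞ.apply_self he ⟨ha, hb⟩]
  | succ n ih =>
    rcases n with _ | N
    · simp [riemannSum]
    obtain ⟨j, hjN, hgap⟩ := exists_add_two_sub_le hp N
    obtain ⟨q, hq, hq0, hqN, hsum⟩ := exists_riemannSum_eq_sub_of_erase Ξ hp hjN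
    set A := p (N + 2) - p 0
    have hA : 0 ≤ A := sub_nonneg.2 (hp (Nat.zero_le _))
    have hdefect : ‖Ξ (p j) (p (j + 2)) - Ξ (p j) (p (j + 1)) - Ξ (p (j + 1)) (p (j + 2))‖
        ≤ L * (2 * A) ^ e * ((N + 1 : ℕ) : ℝ) ^ (-e) := by
      calc _ ≤ L * (p (j + 2) - p j) ^ e :=
            hΞ (ha.trans (hp (Nat.zero_le _))) (hp (by omega)) (hp (by omega))
              ((hp (by omega)).trans hb)
        _ ≤ L * (2 * A / (N + 1)) ^ e := by
          gcongr
          exact sub_nonneg.2 (hp (by omega))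
        _ = L * (2 * A) ^ e * ((N + 1 : ℕ) : ℝ) ^ (-e) := by
          rw [Real.div_rpow (by linarith) (by positivity), Real.rpow_neg (by positivity)]
          push_cast
          ring
    calc ‖riemannSum Ξ p (N + 2) - Ξ (p 0) (p (N + 2))‖
        ≤ ‖riemannSum Ξ q (N + 1) - Ξ (q 0) (q (N + 1))‖
          + ‖Ξ (p j) (p (j + 2)) - Ξ (p j) (p (j + 1)) - Ξ (p (j + 1)) (p (j + 2))‖ := by
          rw [hsum, hq0, hqN, sub_right_comm]
          exact norm_sub_le _ _
      _ ≤ L * (2 * A) ^ e * ∑ k ∈ Ico 1 (N + 1), (k : ℝ) ^ (-e)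
          + L * (2 * A) ^ e * ((N + 1 : ℕ) : ℝ) ^ (-e) := by
          gcongr
          simpa [hq0, hqN] using ih hq (hq0 ▸ ha) (hqN ▸ hb)
      _ = L * (2 * A) ^ e * ∑ k ∈ Ico 1 (N + 2), (k : ℝ) ^ (-e) := by
          rw [sum_Ico_succ_top (by omega : 1 ≤ N + 1)]
          ring

lemma norm_riemannSum_sub_le (hL : 0 ≤ L) (he : 1 < e) (hΞ : HasSewingBound Ξ a b L e)
    (n : ℕ) {p : ℕ → ℝ} (hp : Monotone p) (ha : a ≤ p 0) (hb : p n ≤ b) :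
    ‖riemannSum Ξ p n - Ξ (p 0) (p n)‖ ≤ sewingConst e * L * (p n - p 0) ^ e := by
  have hA : 0 ≤ p n - p 0 := sub_nonneg.2 (hp (Nat.zero_le n))
  have htsum : ∑ k ∈ Ico 1 n, (k : ℝ) ^ (-e) ≤ ∑' k : ℕ, (k : ℝ) ^ (-e) :=
    (summable_nat_rpow_neg he).sum_le_tsum _ fun k _ => by positivity
  calc _ ≤ L * (2 * (p n - p 0)) ^ e * ∑ k ∈ Ico 1 n, (k : ℝ) ^ (-e) :=
        norm_riemannSum_sub_le_sum hL (by linarith) hΞ n hp ha hb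
    _ ≤ L * (2 * (p n - p 0)) ^ e * ∑' k : ℕ, (k : ℝ) ^ (-e) := by gcongr
    _ = sewingConst e * L * (p n - p 0) ^ e := by
        rw [Real.mul_rpow zero_le_two hA, sewingConst]
        ring

lemma norm_sum_Ico_sub_riemannSum_comp_le (hL : 0 ≤ L) (he : 1 < e)
    (hΞ : HasSewingBound Ξ a b L e) {r : ℕ → ℝ} (hr : Monotone r) {f : ℕ → ℕ} (hf : Monotone f)
    {M : ℝ} (n : ℕ) (ha : a ≤ r (f 0)) (hb : r (f n) ≤ b)
    (hM : ∀ i < n, r (f (i + 1)) - r (f i) ≤ M) :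
    ‖∑ k ∈ Ico (f 0) (f n), Ξ (r k) (r (k + 1)) - riemannSum Ξ (r ∘ f) n‖
      ≤ sewingConst e * L * M ^ (e - 1) * (r (f n) - r (f 0)) := by
  induction n with
  | zero => simp [riemannSum]
  | succ n ih =>
    have hfn : f n ≤ f (n + 1) := hf n.le_succ
    have hblock : ‖∑ k ∈ Ico (f n) (f (n + 1)), Ξ (r k) (r (k + 1)) - Ξ (r (f n)) (r (f (n + 1)))‖
        ≤ sewingConst e * L * M ^ (e - 1) * (r (f (n + 1)) - r (f n)) := by
      have hshift := norm_riemannSum_sub_le hL he hΞ (f (n + 1) - f n)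
        (p := fun k => r (f n + k)) (fun k l hkl => hr (by omega))
        (ha.trans (hr (hf (Nat.zero_le n)))) (by simpa [Nat.add_sub_cancel' hfn] using hb)
      simp only [add_zero, Nat.add_sub_cancel' hfn] at hshift
      rw [sum_Ico_eq_sum_range]
      refine hshift.trans ?_
      have := sewingConst_pos he
      rw [mul_assoc _ (M ^ (e - 1))]
      gcongr
      exact rpow_le_rpow_sub_one_mul he.le (sub_nonneg.2 (hr hfn)) (hM n n.lt_succ_self)
    rw [← sum_Ico_consecutive _ (hf (Nat.zero_le n)) hfn, riemannSum, sum_range_succ,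
      add_sub_add_comm]
    calc _ ≤ _ + _ := norm_add_le _ _
      _ ≤ sewingConst e * L * M ^ (e - 1) * (r (f n) - r (f 0))
          + sewingConst e * L * M ^ (e - 1) * (r (f (n + 1)) - r (f n)) :=
          add_le_add (ih ((hr hfn).trans hb) fun i hi => hM i (by omega)) hblock
      _ = _ := by ring

lemma Finset.exists_monotone_enumeration (G : Finset ℝ) :
    ∃ (r : ℕ → ℝ) (idx : ℝ → ℕ), Monotone r ∧ MonotoneOn idx G ∧ ∀ x ∈ G, r (idx x) = x := by
  classical
  rcases G.eq_empty_or_nonempty with rfl | hG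
  · exact ⟨0, 0, monotone_const, monotoneOn_const, by simp⟩
  obtain ⟨N, hN⟩ := Nat.exists_eq_succ_of_ne_zero (card_pos.2 hG).ne'
  let φ := G.orderIsoOfFin hN
  refine ⟨fun k => φ (Fin.clamp k N), fun x => if hx : x ∈ G then φ.symm ⟨x, hx⟩ else 0,
    fun k l hkl => φ.monotone (show min k N ≤ min l N by omega), ?_, fun x hx => ?_⟩
  · intro x hx y hy hxy
    rw [mem_coe] at hx hy
    dsimp only
    rw [dif_pos hx, dif_pos hy]
    exact φ.symm.monotone (show (⟨x, hx⟩ : G) ≤ ⟨y, hy⟩ from hxy)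
  · have hclamp : Fin.clamp (φ.symm ⟨x, hx⟩ : ℕ) N = φ.symm ⟨x, hx⟩ :=
      Fin.ext (min_eq_left (Nat.lt_succ_iff.1 (φ.symm ⟨x, hx⟩).isLt))
    simp only [dif_pos hx, hclamp, OrderIso.apply_symm_apply]

lemma norm_riemannSum_sub_riemannSum_le (hL : 0 ≤ L) (he : 1 < e)
    (hΞ : HasSewingBound Ξ a b L e) {p q : ℕ → ℝ} {n m : ℕ} (hp : Monotone p) (hq : Monotone q)
    (h0 : p 0 = q 0) (hnm : p n = q m) (ha : a ≤ p 0) (hb : p n ≤ b) {M : ℝ}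
    (hpM : ∀ i < n, p (i + 1) - p i ≤ M) (hqM : ∀ i < m, q (i + 1) - q i ≤ M) :
    ‖riemannSum Ξ p n - riemannSum Ξ q m‖
      ≤ 2 * (sewingConst e * L * M ^ (e - 1) * (p n - p 0)) := by
  classical
  set G := (range (n + 1)).image p ∪ (range (m + 1)).image q
  -- `r` enumerates the common refinement `G`; both partitions factor through it.
  obtain ⟨r, idx, hr, hidx, hr_idx⟩ := G.exists_monotone_enumeration
  have hpG : ∀ i ≤ n, p i ∈ G := fun i hi =>
    mem_union_left _ (mem_image_of_mem p (mem_range.2 (Nat.lt_succ_of_le hi)))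
  have hqG : ∀ i ≤ m, q i ∈ G := fun i hi =>
    mem_union_right _ (mem_image_of_mem q (mem_range.2 (Nat.lt_succ_of_le hi)))
  have hr0 : r (idx (p 0)) = p 0 := hr_idx _ (hpG 0 (Nat.zero_le n))
  have hrn : r (idx (p n)) = p n := hr_idx _ (hpG n le_rfl)
  have hrefine : ∀ (w : ℕ → ℝ) (k : ℕ), Monotone w → (∀ i ≤ k, w i ∈ G) → w 0 = p 0 →
      w k = p n → (∀ i < k, w (i + 1) - w i ≤ M) →
      ‖∑ j ∈ Ico (idx (p 0)) (idx (p n)), Ξ (r j) (r (j + 1)) - riemannSum Ξ w k‖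
        ≤ sewingConst e * L * M ^ (e - 1) * (p n - p 0) := by
    intro w k hw hwG hw0 hwk hwM
    have hrf : ∀ i ≤ k, r (idx (w (min i k))) = w i := fun i hi => by
      rw [min_eq_left hi, hr_idx _ (hwG i hi)]
    have hsum : riemannSum Ξ (r ∘ fun i => idx (w (min i k))) k = riemannSum Ξ w k :=
      sum_congr rfl fun i hi => by
        simp only [Function.comp, hrf i (by simp at hi; omega), hrf (i + 1) (by simp at hi; omega)]
    have hmono : Monotone fun i => idx (w (min i k)) := fun i j hij =>
      hidx (hwG _ (min_le_right _ _)) (hwG _ (min_le_right _ _)) (hw (min_le_min_right k hij))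
    have := norm_sum_Ico_sub_riemannSum_comp_le hL he hΞ hr hmono k
      (by simpa [hw0, hr0] using ha) (by simpa [hwk, hrn] using hb)
      (fun i hi => by rw [hrf i hi.le, hrf (i + 1) hi]; exact hwM i hi)
    simpa only [hsum, Nat.zero_min, min_self, hw0, hwk, hr0, hrn] using this
  calc _ ≤ ‖riemannSum Ξ p n - _‖ + ‖_ - riemannSum Ξ q m‖ :=
        norm_sub_le_norm_sub_add_norm_sub _
          (∑ j ∈ Ico (idx (p 0)) (idx (p n)), Ξ (r j) (r (j + 1))) _
    _ ≤ _ := by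
        rw [norm_sub_rev, two_mul]
        exact add_le_add (hrefine p n hp hpG rfl rfl hpM)
          (hrefine q m hq hqG h0.symm hnm.symm hqM)

def uniformPartition (s t : ℝ) (m k : ℕ) : ℝ := s + (t - s) * ((min k m : ℕ) / m)

@[simp] lemma uniformPartition_zero (s t : ℝ) (m : ℕ) : uniformPartition s t m 0 = s := by
  simp [uniformPartition]

lemma uniformPartition_self (s t : ℝ) {m : ℕ} (hm : m ≠ 0) : uniformPartition s t m m = t := by
  simp [uniformPartition, div_self (Nat.cast_ne_zero.2 hm : (m : ℝ) ≠ 0)]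

lemma monotone_uniformPartition {s t : ℝ} (hst : s ≤ t) (m : ℕ) :
    Monotone (uniformPartition s t m) := fun k l hkl => by
  have : ((min k m : ℕ) : ℝ) ≤ (min l m : ℕ) := by exact_mod_cast min_le_min_right m hkl
  unfold uniformPartition
  gcongr

lemma uniformPartition_succ_sub_le {s t : ℝ} (hst : s ≤ t) {N m : ℕ} (hNm : N ≤ m) (k : ℕ) :
    uniformPartition s t (m + 1) (k + 1) - uniformPartition s t (m + 1) k ≤ (t - s) / (N + 1) := by
  have hstep : ((min (k + 1) (m + 1) : ℕ) : ℝ) - (min k (m + 1) : ℕ) ≤ 1 := by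
    have : min (k + 1) (m + 1) ≤ min k (m + 1) + 1 := by omega
    have := (Nat.cast_le (α := ℝ)).2 this
    push_cast at this ⊢
    linarith
  calc _ = (t - s) * (((min (k + 1) (m + 1) : ℕ) : ℝ) - (min k (m + 1) : ℕ)) / (m + 1) := by
        simp only [uniformPartition]; push_cast; ring
    _ ≤ (t - s) * 1 / (m + 1) := by gcongr
    _ ≤ (t - s) / (N + 1) := by
        rw [mul_one]
        gcongr

def concatPartition (p : ℕ → ℝ) (n : ℕ) (q : ℕ → ℝ) (k : ℕ) : ℝ :=
  if k ≤ n then p k else q (k - n)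

section concatPartition

variable {p q : ℕ → ℝ} {n : ℕ}

lemma concatPartition_of_le {k : ℕ} (hk : k ≤ n) : concatPartition p n q k = p k := by
  simp [concatPartition, hk]

lemma concatPartition_add (h : p n = q 0) (k : ℕ) : concatPartition p n q (n + k) = q k := by
  rcases k.eq_zero_or_pos with rfl | hk
  · simp [concatPartition, h]
  · simp [concatPartition, show ¬ n + k ≤ n by omega]

lemma monotone_concatPartition (hp : Monotone p) (hq : Monotone q) (h : p n = q 0) :
    Monotone (concatPartition p n q) := by
  refine monotone_nat_of_le_succ fun k => ?_
  rcases lt_or_ge k n with hk | hk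
  · rw [concatPartition_of_le hk.le, concatPartition_of_le hk]
    exact hp k.le_succ
  · obtain ⟨j, rfl⟩ := Nat.exists_eq_add_of_le hk
    rw [concatPartition_add h, add_assoc, concatPartition_add h]
    exact hq j.le_succ

lemma riemannSum_concatPartition (Ξ : ℝ → ℝ → E) (h : p n = q 0) (m : ℕ) :
    riemannSum Ξ (concatPartition p n q) (n + m) = riemannSum Ξ p n + riemannSum Ξ q m := by
  rw [riemannSum, sum_range_add]
  congr 1
  · refine sum_congr rfl fun k hk => ?_
    rw [Finset.mem_range] at hk
    rw [concatPartition_of_le hk.le, concatPartition_of_le hk]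
  · exact sum_congr rfl fun k _ => by rw [concatPartition_add h, add_assoc, concatPartition_add h]

lemma concatPartition_succ_sub_le (h : p n = q 0) {m : ℕ} {M : ℝ}
    (hpM : ∀ i < n, p (i + 1) - p i ≤ M) (hqM : ∀ i < m, q (i + 1) - q i ≤ M) :
    ∀ i < n + m, concatPartition p n q (i + 1) - concatPartition p n q i ≤ M := by
  intro i hi
  rcases lt_or_ge i n with hin | hin
  · rw [concatPartition_of_le hin, concatPartition_of_le hin.le]
    exact hpM i hin
  · obtain ⟨j, rfl⟩ := Nat.exists_eq_add_of_le hin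
    rw [add_assoc, concatPartition_add h, concatPartition_add h]
    exact hqM j (by omega)

end concatPartition

def uniformRiemannSum (Ξ : ℝ → ℝ → E) (s t : ℝ) (m : ℕ) : E :=
  riemannSum Ξ (uniformPartition s t (m + 1)) (m + 1)

lemma cauchySeq_uniformRiemannSum (hL : 0 ≤ L) (he : 1 < e) (hΞ : HasSewingBound Ξ a b L e)
    {t : ℝ} (hat : a ≤ t) (htb : t ≤ b) : CauchySeq (uniformRiemannSum Ξ a t) := by
  refine cauchySeq_of_le_tendsto_0
    (fun N : ℕ => 2 * (sewingConst e * L * ((t - a) / (N + 1)) ^ (e - 1) * (t - a)))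
    (fun m m' N hm hm' => ?_) ?_
  · have := norm_riemannSum_sub_riemannSum_le hL he hΞ (monotone_uniformPartition hat _)
      (monotone_uniformPartition hat _) (by simp)
      (by rw [uniformPartition_self _ _ m.succ_ne_zero, uniformPartition_self _ _ m'.succ_ne_zero])
      (by simp) (by rw [uniformPartition_self _ _ m.succ_ne_zero]; exact htb)
      (fun i _ => uniformPartition_succ_sub_le hat hm i)
      (fun i _ => uniformPartition_succ_sub_le hat hm' i)
    rwa [uniformPartition_self _ _ m.succ_ne_zero, uniformPartition_zero, ← dist_eq_norm] at this
  · simpa using (((tendsto_div_add_one_rpow_nhds_zero (t - a) (sub_pos.2 he)).const_mul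
      (sewingConst e * L)).mul_const (t - a)).const_mul 2

def sewingMap (Ξ : ℝ → ℝ → E) (a t : ℝ) : E := limUnder atTop (uniformRiemannSum Ξ a t)

lemma sewingMap_self (he : 0 < e) (hΞ : HasSewingBound Ξ a b L e) (hab : a ≤ b) :
    sewingMap Ξ a a = 0 := by
  have : uniformRiemannSum Ξ a a = fun _ => 0 := funext fun m => by
    simp [uniformRiemannSum, riemannSum, uniformPartition, hΞ.apply_self he ⟨le_rfl, hab⟩]
  rw [sewingMap, this, tendsto_const_nhds.limUnder_eq]

lemma sum_fin_eq_riemannSum_clamp (Ξ : ℝ → ℝ → E) {n : ℕ} (σ : Fin (n + 1) → ℝ) :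
    ∑ i : Fin n, Ξ (σ i.castSucc) (σ i.succ) = riemannSum Ξ (fun k => σ (Fin.clamp k n)) n := by
  rw [riemannSum, ← Fin.sum_univ_eq_sum_range]
  refine sum_congr rfl fun i _ => ?_
  congr 2 <;> ext <;> simp [Fin.clamp]

variable [CompleteSpace E]

lemma tendsto_uniformRiemannSum_sewingMap (hL : 0 ≤ L) (he : 1 < e)
    (hΞ : HasSewingBound Ξ a b L e) {t : ℝ} (hat : a ≤ t) (htb : t ≤ b) :
    Tendsto (uniformRiemannSum Ξ a t) atTop (𝓝 (sewingMap Ξ a t)) :=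
  (cauchySeq_uniformRiemannSum hL he hΞ hat htb).tendsto_limUnder

lemma norm_sewingMap_sub_sub_riemannSum_le (hL : 0 ≤ L) (he : 1 < e)
    (hΞ : HasSewingBound Ξ a b L e) {s t : ℝ} (has : a ≤ s) (hst : s ≤ t) (htb : t ≤ b)
    {p : ℕ → ℝ} {n : ℕ} (hp : Monotone p) (hp0 : p 0 = s) (hpn : p n = t) {M : ℝ} (hM : 0 < M)
    (hpM : ∀ i < n, p (i + 1) - p i ≤ M) :
    ‖(sewingMap Ξ a t - sewingMap Ξ a s) - riemannSum Ξ p n‖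
      ≤ 2 * (sewingConst e * L * M ^ (e - 1) * (t - a)) := by
  have hat : a ≤ t := has.trans hst
  have hlim : Tendsto (fun m => ‖uniformRiemannSum Ξ a s m + riemannSum Ξ p n
      - uniformRiemannSum Ξ a t m‖) atTop
      (𝓝 ‖sewingMap Ξ a s + riemannSum Ξ p n - sewingMap Ξ a t‖) :=
    (((tendsto_uniformRiemannSum_sewingMap hL he hΞ has (hst.trans htb)).add_const _).sub
      (tendsto_uniformRiemannSum_sewingMap hL he hΞ hat htb)).norm
  obtain ⟨N, hN⟩ := ((by simpa using tendsto_div_add_one_rpow_nhds_zero (t - a) one_pos :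
    Tendsto (fun m : ℕ => (t - a) / (m + 1)) atTop (𝓝 0)).eventually (gt_mem_nhds hM)).exists
  rw [← norm_neg, neg_sub, sub_sub_eq_add_sub, add_comm (riemannSum Ξ p n)]
  refine le_of_tendsto hlim (eventually_atTop.2 ⟨N, fun m hm => ?_⟩)
  -- concatenate a uniform partition of `[a, s]` with `p`, and compare with one of `[a, t]`
  have hu : uniformPartition a s (m + 1) (m + 1) = p 0 := by
    rw [uniformPartition_self _ _ m.succ_ne_zero, hp0]
  have hmesh : ∀ {r : ℝ}, a ≤ r → r ≤ t → ∀ i, uniformPartition a r (m + 1) (i + 1)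
      - uniformPartition a r (m + 1) i ≤ M := fun har hrt i =>
    (uniformPartition_succ_sub_le har hm i).trans
      ((div_le_div_of_nonneg_right (by linarith) (by positivity)).trans hN.le)
  have := norm_riemannSum_sub_riemannSum_le hL he hΞ
    (monotone_concatPartition (monotone_uniformPartition has _) hp hu)
    (monotone_uniformPartition hat (m + 1)) (n := m + 1 + n) (m := m + 1)
    (by simp [concatPartition_of_le])
    (by rw [concatPartition_add hu, hpn, uniformPartition_self _ _ m.succ_ne_zero])
    (by simp [concatPartition_of_le]) (by rw [concatPartition_add hu, hpn]; exact htb)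
    (concatPartition_succ_sub_le hu (fun i _ => hmesh has hst i) hpM)
    (fun i _ => hmesh hat le_rfl i)
  rwa [riemannSum_concatPartition Ξ hu, concatPartition_add hu, hpn,
    concatPartition_of_le (Nat.zero_le _), uniformPartition_zero] at this

lemma norm_sewingMap_sub_sub_le (hL : 0 ≤ L) (he : 1 < e) (hΞ : HasSewingBound Ξ a b L e)
    {s t : ℝ} (has : a ≤ s) (hst : s ≤ t) (htb : t ≤ b) :
    ‖(sewingMap Ξ a t - sewingMap Ξ a s) - Ξ s t‖ ≤ sewingConst e * L * (t - s) ^ e := by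
  set M : ℕ → ℝ := fun m => (t - s + 1) / (m + 1)
  have hbound : ∀ m : ℕ, ‖(sewingMap Ξ a t - sewingMap Ξ a s) - Ξ s t‖
      ≤ 2 * (sewingConst e * L * M m ^ (e - 1) * (t - a)) + sewingConst e * L * (t - s) ^ e := by
    intro m
    have hp := monotone_uniformPartition hst (m + 1)
    have hpn := uniformPartition_self s t m.succ_ne_zero
    calc _ ≤ ‖(sewingMap Ξ a t - sewingMap Ξ a s) - uniformRiemannSum Ξ s t m‖
          + ‖uniformRiemannSum Ξ s t m - Ξ s t‖ := norm_sub_le_norm_sub_add_norm_sub _ _ _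
      _ ≤ _ := by
        gcongr
        · exact norm_sewingMap_sub_sub_riemannSum_le hL he hΞ has hst htb hp
            (uniformPartition_zero _ _ _) hpn (by positivity) fun i _ =>
              (uniformPartition_succ_sub_le hst le_rfl i).trans
                (div_le_div_of_nonneg_right (by linarith) (by positivity))
        · simpa [hpn, uniformRiemannSum] using
            norm_riemannSum_sub_le hL he hΞ (m + 1) hp (by simpa using has) (by rwa [hpn])
  refine ge_of_tendsto' (x := atTop) ?_ hbound
  simpa using ((((tendsto_div_add_one_rpow_nhds_zero (t - s + 1) (sub_pos.2 he)).const_mul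
    (sewingConst e * L)).mul_const (t - a)).const_mul 2).add_const _

lemma isRiemannLimit_sewingMap (hL : 0 ≤ L) (he : 1 < e) (hΞ : HasSewingBound Ξ a b L e)
    {s t : ℝ} (has : a ≤ s) (hst : s ≤ t) (htb : t ≤ b) :
    IsRiemannLimit Ξ s t (sewingMap Ξ a t - sewingMap Ξ a s) := by
  intro ε hε
  have hsmall : Tendsto (fun m : ℕ => 2 * (sewingConst e * L * (1 / (m + 1)) ^ (e - 1) * (b - a)))
      atTop (𝓝 0) := by
    simpa using (((tendsto_div_add_one_rpow_nhds_zero 1 (sub_pos.2 he)).const_mul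
      (sewingConst e * L)).mul_const (b - a)).const_mul 2
  obtain ⟨m, hm⟩ := (hsmall.eventually (gt_mem_nhds hε)).exists
  refine ⟨1 / (m + 1), by positivity, fun n σ hσ hσ0 hσn hmesh => ?_⟩
  rw [sum_fin_eq_riemannSum_clamp, norm_sub_rev]
  have := sewingConst_pos he
  calc _ ≤ 2 * (sewingConst e * L * (1 / (m + 1)) ^ (e - 1) * (t - a)) :=
        norm_sewingMap_sub_sub_riemannSum_le hL he hΞ has hst htb
          (p := fun k => σ (Fin.clamp k n)) (fun k l hkl => hσ (show min k n ≤ min l n by omega))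
          ((congrArg σ (Fin.ext (by simp [Fin.clamp]))).trans hσ0)
          ((congrArg σ (Fin.ext (by simp [Fin.clamp]))).trans hσn) (by positivity)
          fun i hi => by
            simpa [Fin.clamp, min_eq_left hi.le, min_eq_left (Nat.succ_le_of_lt hi)]
              using (hmesh ⟨i, hi⟩).le
    _ ≤ 2 * (sewingConst e * L * (1 / (m + 1)) ^ (e - 1) * (b - a)) := by gcongr
    _ < ε := hm

end Sewing

lemma norm_integral_sub_integral_le_of_lipschitzWith {X F : Type*} [PseudoMetricSpace X]
    [MeasurableSpace X] [NormedAddCommGroup F] [NormedSpace ℝ F] [CompleteSpace F]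
    {μ ν : Measure X} {M : ℝ}
    (hμν : ∀ φ : X → ℝ, LipschitzWith 1 φ → ∫ x, φ x ∂μ - ∫ x, φ x ∂ν ≤ M)
    {K : ℝ≥0} (hK : 0 < K) {f : X → F} (hf : LipschitzWith K f) (hfμ : Integrable f μ)
    (hfν : Integrable f ν) : ‖∫ x, f x ∂μ - ∫ x, f x ∂ν‖ ≤ K * M := by
  obtain ⟨g, hg, hgv⟩ := exists_dual_vector'' ℝ (∫ x, f x ∂μ - ∫ x, f x ∂ν)
  have hK' : (0 : ℝ) < K := hK
  have hφ : LipschitzWith 1 fun x => (K : ℝ)⁻¹ * g (f x) := by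
    refine LipschitzWith.of_dist_le_mul fun x y => ?_
    rw [Real.dist_eq, ← mul_sub, ← map_sub, abs_mul, abs_inv, abs_of_pos hK', NNReal.coe_one,
      one_mul, inv_mul_le_iff₀ hK']
    calc |g (f x - f y)| ≤ ‖g‖ * ‖f x - f y‖ := g.le_opNorm _
      _ ≤ 1 * (K * dist x y) := by
          gcongr
          simpa [dist_eq_norm] using hf.dist_le_mul x y
      _ = K * dist x y := one_mul _
  have := hμν _ hφ
  rwa [integral_const_mul, integral_const_mul, ← mul_sub, g.integral_comp_comm hfμ,
    g.integral_comp_comm hfν, ← map_sub, hgv, RCLike.ofReal_real_eq_id, id,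
    inv_mul_le_iff₀ hK'] at this

section convInc

variable {d : ℕ} {Γ : ℝ → Ed d → Ed d} {s u t : ℝ} {m m' : Measure (Ed d)} {K : ℝ≥0}

lemma lipschitzWith_comp_const_sub {D : Ed d → Ed d} (hD : LipschitzWith K D) (x : Ed d) :
    LipschitzWith K fun y => D (x - y) :=
  LipschitzWith.of_dist_le_mul fun y y' => by
    simpa [dist_eq_norm, norm_sub_rev y y'] using hD.dist_le_mul (x - y) (x - y')

lemma integrable_comp_const_sub [IsFiniteMeasure m] {D : Ed d → Ed d} (hD : LipschitzWith K D)
    {B : ℝ} (hB : ∀ z, ‖D z‖ ≤ B) (x : Ed d) : Integrable (fun y => D (x - y)) m :=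
  .of_bound (lipschitzWith_comp_const_sub hD x).continuous.aestronglyMeasurable B
    (ae_of_all _ fun _ => hB _)

lemma convInc_sub_convInc {x : Ed d}
    (hst : Integrable (fun y => Γ t (x - y) - Γ s (x - y)) m)
    (hsu : Integrable (fun y => Γ u (x - y) - Γ s (x - y)) m) :
    convInc Γ s t m x - convInc Γ s u m x = convInc Γ u t m x := by
  simp only [convInc, ← integral_sub hst hsu, sub_sub_sub_cancel_right]

lemma norm_convInc_sub_convInc_le [IsProbabilityMeasure m]
    (hK : LipschitzWith K fun z => Γ t z - Γ s z) {B : ℝ} (hB : ∀ z, ‖Γ t z - Γ s z‖ ≤ B)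
    (x x' : Ed d) : ‖convInc Γ s t m x - convInc Γ s t m x'‖ ≤ K * ‖x - x'‖ := by
  rw [convInc, convInc, ← integral_sub (integrable_comp_const_sub hK hB x)
    (integrable_comp_const_sub hK hB x')]
  simpa using norm_integral_le_of_norm_le_const (μ := m) (ae_of_all _ fun y => by
    simpa using hK.norm_sub_le (x - y) (x' - y))

lemma norm_convInc_defect_le [IsProbabilityMeasure m] [IsProbabilityMeasure m'] {x x' : Ed d}
    (hK0 : 0 < K) (hK : LipschitzWith K fun z => Γ t z - Γ u z) {B : ℝ}
    (hB : ∀ z, ‖Γ t z - Γ u z‖ ≤ B)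
    (hst : Integrable (fun y => Γ t (x - y) - Γ s (x - y)) m)
    (hsu : Integrable (fun y => Γ u (x - y) - Γ s (x - y)) m) {M : ℝ}
    (hmm' : ∀ φ : Ed d → ℝ, LipschitzWith 1 φ → ∫ y, φ y ∂m - ∫ y, φ y ∂m' ≤ M) :
    ‖convInc Γ s t m x - convInc Γ s u m x - convInc Γ u t m' x'‖ ≤ K * (‖x - x'‖ + M) := by
  rw [convInc_sub_convInc hst hsu, mul_add]
  refine (norm_sub_le_norm_sub_add_norm_sub _ (convInc Γ u t m x') _).trans (add_le_add
    (norm_convInc_sub_convInc_le hK hB x x') ?_)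
  exact norm_integral_sub_integral_le_of_lipschitzWith hmm' hK0
    (lipschitzWith_comp_const_sub hK x') (integrable_comp_const_sub hK hB x')
    (integrable_comp_const_sub hK hB x')

end convInc

lemma hasSewingBound_convInc {d : ℕ} {γ β C T Mμ MY : ℝ} (hγ : 0 ≤ γ) (hβ : 0 < β) (hC : 0 < C)
    (hMμ : 0 ≤ Mμ) (hMY : 0 ≤ MY) {Γ : ℝ → Ed d → Ed d}
    (hΓt : ∀ s ∈ Icc (0:ℝ) T, ∀ t ∈ Icc (0:ℝ) T, ∀ x : Ed d,
      ‖Γ t x - Γ s x‖ ≤ C * |t - s| ^ γ)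
    (hΓx : ∀ s ∈ Icc (0:ℝ) T, ∀ t ∈ Icc (0:ℝ) T, ∀ x y : Ed d,
      ‖(Γ t x - Γ s x) - (Γ t y - Γ s y)‖ ≤ C * |t - s| ^ γ * ‖x - y‖)
    {μf : ℝ → Measure (Ed d)} (hprob : ∀ t ∈ Icc (0:ℝ) T, IsProbabilityMeasure (μf t))
    (hμ : ∀ s ∈ Icc (0:ℝ) T, ∀ t ∈ Icc (0:ℝ) T, ∀ φ : Ed d → ℝ, LipschitzWith 1 φ →
      (∫ x, φ x ∂(μf t)) - (∫ x, φ x ∂(μf s)) ≤ Mμ * |t - s| ^ β)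
    {Y : ℝ → Ed d} (hY : ∀ u ∈ Icc (0:ℝ) T, ∀ v ∈ Icc (0:ℝ) T, ‖Y v - Y u‖ ≤ MY * |v - u| ^ β) :
    HasSewingBound (fun u v => convInc Γ u v (μf u) (Y u)) 0 T (C * (MY + Mμ)) (γ + β) := by
  intro s u t hs hsu hut ht
  have hsI : s ∈ Icc 0 T := ⟨hs, by linarith⟩
  have huI : u ∈ Icc 0 T := ⟨by linarith, by linarith⟩
  have htI : t ∈ Icc 0 T := ⟨by linarith, ht⟩
  have := hprob s hsI
  have := hprob u huI
  have hlip : ∀ {v w}, v ∈ Icc 0 T → w ∈ Icc 0 T →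
      LipschitzWith (C * |w - v| ^ γ).toNNReal fun z => Γ w z - Γ v z := fun hv hw =>
    LipschitzWith.of_dist_le' fun x y => by simpa [dist_eq_norm] using hΓx _ hv _ hw x y
  have hint : ∀ {v w}, v ∈ Icc 0 T → w ∈ Icc 0 T →
      Integrable (fun y => Γ w (Y s - y) - Γ v (Y s - y)) (μf s) := fun hv hw =>
    integrable_comp_const_sub (hlip hv hw) (hΓt _ hv _ hw) _
  rcases hut.eq_or_lt with rfl | hut
  · simp only [convInc, sub_self, integral_zero, norm_zero]
    have : 0 ≤ u - s := sub_nonneg.2 hsu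
    positivity
  have hK0 : 0 < C * |t - u| ^ γ := by
    have : 0 < |t - u| := abs_pos.2 (sub_ne_zero.2 hut.ne')
    positivity
  have hYsu : ‖Y s - Y u‖ ≤ MY * (u - s) ^ β := by
    simpa [abs_of_nonpos (sub_nonpos.2 hsu)] using hY u huI s hsI
  calc _ ≤ (C * |t - u| ^ γ).toNNReal * (‖Y s - Y u‖ + Mμ * |s - u| ^ β) :=
        norm_convInc_defect_le (Real.toNNReal_pos.2 hK0) (hlip huI htI) (hΓt u huI t htI)
          (hint hsI htI) (hint hsI huI) (hμ u huI s hsI)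
    _ ≤ C * (t - u) ^ γ * (MY * (u - s) ^ β + Mμ * (u - s) ^ β) := by
        rw [Real.coe_toNNReal _ hK0.le, abs_of_pos (sub_pos.2 hut), abs_sub_comm,
          abs_of_nonneg (sub_nonneg.2 hsu)]
        gcongr
    _ = C * (MY + Mμ) * ((t - u) ^ γ * (u - s) ^ β) := by ring
    _ ≤ C * (MY + Mμ) * (t - s) ^ (γ + β) := by
        gcongr
        exact rpow_mul_rpow_le_rpow_add hsu hut.le hγ hβ

/-- **Measure-dependent nonlinear Young integral (sewing).** Under the time-Hölder and
spatial-Lipschitz bounds on `Γ`, for any β-Hölder measure flow and β-Hölder path with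
`γ + β > 1`, the Riemann sums of `(Γ_{u,v} ∗ μ_u)(Y_u)` converge, and the sewing error
estimate holds with a constant depending only on `γ, β` and the bound on `Γ`. -/
theorem stmt4 (d : ℕ) (γ β C : ℝ) (hγ : γ ∈ Ioo (1/2 : ℝ) 1) (hβ : 0 < β)
    (hγβ : 1 < γ + β) (hC : 0 < C) :
    ∃ C' > (0:ℝ), ∀ T > (0:ℝ), ∀ Γ : ℝ → Ed d → Ed d,
      (∀ s ∈ Icc (0:ℝ) T, ∀ t ∈ Icc (0:ℝ) T, ∀ x : Ed d,
        ‖Γ t x - Γ s x‖ ≤ C * |t - s| ^ γ) →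
      (∀ s ∈ Icc (0:ℝ) T, ∀ t ∈ Icc (0:ℝ) T, ∀ x y : Ed d,
        ‖(Γ t x - Γ s x) - (Γ t y - Γ s y)‖ ≤ C * |t - s| ^ γ * ‖x - y‖) →
      ∀ μf : ℝ → Measure (Ed d),
      (∀ t ∈ Icc (0:ℝ) T, IsProbabilityMeasure (μf t)) →
      (∀ t ∈ Icc (0:ℝ) T, ∫⁻ y, ENNReal.ofReal ‖y‖ ∂(μf t) < ⊤) →
      ∀ Mμ ≥ (0:ℝ), ∀ MY ≥ (0:ℝ),
      (∀ s ∈ Icc (0:ℝ) T, ∀ t ∈ Icc (0:ℝ) T, ∀ φ : Ed d → ℝ, LipschitzWith 1 φ →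
        (∫ x, φ x ∂(μf t)) - (∫ x, φ x ∂(μf s)) ≤ Mμ * |t - s| ^ β) →
      ∀ Y : ℝ → Ed d,
      (∀ u ∈ Icc (0:ℝ) T, ∀ v ∈ Icc (0:ℝ) T, ‖Y v - Y u‖ ≤ MY * |v - u| ^ β) →
      ∃ I : ℝ → Ed d, I 0 = 0 ∧
        (∀ s ∈ Icc (0:ℝ) T, ∀ t ∈ Icc (0:ℝ) T, s ≤ t →
          IsRiemannLimit (fun u v => convInc Γ u v (μf u) (Y u)) s t (I t - I s)) ∧
        (∀ s ∈ Icc (0:ℝ) T, ∀ t ∈ Icc (0:ℝ) T, s ≤ t →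
          ‖(I t - I s) - convInc Γ s t (μf s) (Y s)‖
            ≤ C' * |t - s| ^ (γ + β) * (MY + Mμ)) := by
  have hK := sewingConst_pos hγβ
  refine ⟨C * sewingConst (γ + β), by positivity, ?_⟩
  intro T hT Γ hΓt hΓx μf hprob _ Mμ hMμ MY hMY hμ Y hY
  have hΞ := hasSewingBound_convInc (by linarith [hγ.1]) hβ hC hMμ hMY hΓt hΓx hprob hμ hY
  have hL : 0 ≤ C * (MY + Mμ) := by positivity
  refine ⟨sewingMap _ 0, sewingMap_self (by linarith) hΞ hT.le,
    fun s hs t ht hst => isRiemannLimit_sewingMap hL hγβ hΞ hs.1 hst ht.2,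
    fun s hs t ht hst => ?_⟩
  rw [abs_of_nonneg (sub_nonneg.2 hst)]
  calc _ ≤ sewingConst (γ + β) * (C * (MY + Mμ)) * (t - s) ^ (γ + β) :=
        norm_sewingMap_sub_sub_le hL hγβ hΞ hs.1 hst ht.2
    _ = _ := by ring
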